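/- Under the stated setup, let λ ∈ ℝ^n with Z_λ finite, and suppose γ̂ ∈ ℝ^n is a global maximizer of γ ↦ A(γ, λ) with Z_{γ̂+λ} finite. Then one step of iterative maximization does not decrease the incomplete-data log-likelihood: L(γ̂ + λ) ≥ L(λ). -/

import Mathlib

/- Common setup: log-linear models over proof trees (complete data X) and
   queries (incomplete data Y). -/

variable {X Y : Type*}

/-- `ν_#(x) = ∑ i, ν_i(x)`. -/
def nuSharp {n : ℕ} (ν : Fin n → X → ℕ) (x : X) : ℕ := ∑ i, ν i x

/-- weighted property sum `λ·ν(x)`. -/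
noncomputable def wdot {n : ℕ} (l : Fin n → ℝ) (ν : Fin n → X → ℕ) (x : X) : ℝ :=
  ∑ i, l i * (ν i x : ℝ)

/-- normalizing constant `Z_λ`. -/
noncomputable def Zpart (p0 : X → ℝ) {n : ℕ} (ν : Fin n → X → ℕ) (l : Fin n → ℝ) : ℝ :=
  ∑' x : X, Real.exp (wdot l ν x) * p0 x

/-- log-linear distribution `p_λ(x)`. -/
noncomputable def pLL (p0 : X → ℝ) {n : ℕ} (ν : Fin n → X → ℕ) (l : Fin n → ℝ) (x : X) : ℝ :=
  (Zpart p0 ν l)⁻¹ * Real.exp (wdot l ν x) * p0 x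

/-- incomplete-data probability `p_λ(y) = ∑_{x ∈ X(y)} p_λ(x)`. -/
noncomputable def pLLY (Yf : X → Y) (p0 : X → ℝ) {n : ℕ} (ν : Fin n → X → ℕ)
    (l : Fin n → ℝ) (y : Y) : ℝ :=
  ∑' x : {x : X // Yf x = y}, pLL p0 ν l x.1

/-- incomplete-data log-likelihood `L(λ) = ∑_{y ∈ 𝒴} ln p_λ(y)`. -/
noncomputable def LL (Yf : X → Y) (p0 : X → ℝ) {n : ℕ} (ν : Fin n → X → ℕ)
    (𝒴 : Multiset Y) (l : Fin n → ℝ) : ℝ :=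
  (𝒴.map fun y => Real.log (pLLY Yf p0 ν l y)).sum

/-- expectation `p_λ[f]`. -/
noncomputable def pExp (p0 : X → ℝ) {n : ℕ} (ν : Fin n → X → ℕ) (l : Fin n → ℝ)
    (f : X → ℝ) : ℝ :=
  ∑' x : X, pLL p0 ν l x * f x

/-- conditional expectation `k_λ[f]` given observed `y`. -/
noncomputable def kExp (Yf : X → Y) (p0 : X → ℝ) {n : ℕ} (ν : Fin n → X → ℕ)
    (l : Fin n → ℝ) (y : Y) (f : X → ℝ) : ℝ :=
  ∑' x : {x : X // Yf x = y}, (pLL p0 ν l x.1 / pLLY Yf p0 ν l y) * f x.1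

/-- auxiliary function
`A(γ,λ) = ∑_{y∈𝒴} (1 + k_λ[γ·ν] − p_λ[∑ i, ν̄_i e^{γ_i ν_#}])`. -/
noncomputable def Aaux (Yf : X → Y) (p0 : X → ℝ) {n : ℕ} (ν : Fin n → X → ℕ)
    (𝒴 : Multiset Y) (γ l : Fin n → ℝ) : ℝ :=
  (𝒴.map fun y =>
    1 + kExp Yf p0 ν l y (fun x => wdot γ ν x)
      - pExp p0 ν l (fun x =>
          ∑ i, ((ν i x : ℝ) / (nuSharp ν x : ℝ)) * Real.exp (γ i * (nuSharp ν x : ℝ)))).sum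

/-
On the fibre `X(y)`, `p_{γ+λ}(x) / p_λ(x) = e^{γ·ν(x)} Z_λ / Z_{γ+λ}`, so Jensen's inequality
for `exp` against the weights `p_λ(x) / p_λ(y)` gives
`k_λ[γ·ν] ≤ ln (p_{γ+λ}(y) / p_λ(y)) + ln (Z_{γ+λ} / Z_λ)`. Moreover
`ln (Z_{γ+λ} / Z_λ) ≤ Z_{γ+λ} / Z_λ - 1 = p_λ[e^{γ·ν}] - 1 ≤ p_λ[∑ ν̄_i e^{γ_i ν_#}] - 1`,
the last step being finite Jensen for the convex combination `γ·ν = ∑ ν̄_i (γ_i ν_#)`.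
Hence `A(γ, λ) ≤ L(γ+λ) - L(λ)` for every `γ`, while `A(γ̂, λ) ≥ A(0, λ) = 0`.
-/

open Real

theorem Real.exp_tsum_mul_le_tsum_mul_exp {ι : Type*} {w t : ι → ℝ} (hw : ∀ i, 0 ≤ w i)
    (hw1 : ∑' i, w i = 1) (hwt : Summable fun i => w i * t i)
    (hwe : Summable fun i => w i * exp (t i)) :
    exp (∑' i, w i * t i) ≤ ∑' i, w i * exp (t i) := by
  set s := ∑' i, w i * t i
  have hwsum : Summable w := by
    by_contra h
    rw [tsum_eq_zero_of_not_summable h] at hw1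
    exact zero_ne_one hw1
  -- the tangent line of `exp` at `s`, weighted by `w i`
  have htangent : ∀ i, exp s * (w i + w i * t i - w i * s) ≤ w i * exp (t i) := fun i =>
    calc exp s * (w i + w i * t i - w i * s) = w i * (exp s * (t i - s + 1)) := by ring
      _ ≤ w i * (exp s * exp (t i - s)) :=
        mul_le_mul_of_nonneg_left
          (mul_le_mul_of_nonneg_left (add_one_le_exp _) (exp_pos s).le) (hw i)
      _ = w i * exp (t i) := by rw [← exp_add, add_sub_cancel]
  have hline : Summable fun i => w i + w i * t i - w i * s :=
    (hwsum.add hwt).sub (hwsum.mul_right s)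
  calc exp s = ∑' i, exp s * (w i + w i * t i - w i * s) := by
        rw [tsum_mul_left, (hwsum.add hwt).tsum_sub (hwsum.mul_right s), hwsum.tsum_add hwt,
          tsum_mul_right, hw1]
        ring
    _ ≤ ∑' i, w i * exp (t i) := (hline.mul_left _).tsum_le_tsum htangent hwe

section LogLinear

variable {n : ℕ} {p0 : X → ℝ} {ν : Fin n → X → ℕ}

noncomputable def nuBarExpSum (γ : Fin n → ℝ) (ν : Fin n → X → ℕ) (x : X) : ℝ :=
  ∑ i, ((ν i x : ℝ) / (nuSharp ν x : ℝ)) * exp (γ i * (nuSharp ν x : ℝ))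

theorem Aaux_eq (Yf : X → Y) (p0 : X → ℝ) (ν : Fin n → X → ℕ) (𝒴 : Multiset Y) (γ l : Fin n → ℝ) :
    Aaux Yf p0 ν 𝒴 γ l = (𝒴.map fun y =>
      1 + kExp Yf p0 ν l y (wdot γ ν) - pExp p0 ν l (nuBarExpSum γ ν)).sum :=
  rfl

theorem wdot_add (γ l : Fin n → ℝ) (x : X) : wdot (γ + l) ν x = wdot γ ν x + wdot l ν x := by
  simp only [wdot, Pi.add_apply, add_mul, Finset.sum_add_distrib]

theorem sum_div_nuSharp_eq_one {x : X} (hx : 1 ≤ nuSharp ν x) :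
    ∑ i, (ν i x : ℝ) / nuSharp ν x = 1 := by
  rw [← Finset.sum_div, ← Nat.cast_sum]
  exact div_self (Nat.cast_ne_zero.2 (Nat.one_le_iff_ne_zero.1 hx))

theorem exp_wdot_le_nuBarExpSum {x : X} (hx : 1 ≤ nuSharp ν x) (γ : Fin n → ℝ) :
    exp (wdot γ ν x) ≤ nuBarExpSum γ ν x := by
  have hν : (0 : ℝ) < nuSharp ν x := by exact_mod_cast hx
  have hcomb : ∑ i, ((ν i x : ℝ) / nuSharp ν x) • (γ i * nuSharp ν x) = wdot γ ν x := by
    refine Finset.sum_congr rfl fun i _ => ?_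
    rw [smul_eq_mul]
    field_simp
  have hjensen := convexOn_exp.map_sum_le (t := Finset.univ) (p := fun i => γ i * nuSharp ν x)
    (fun i _ => by positivity) (sum_div_nuSharp_eq_one hx) fun i _ => Set.mem_univ _
  rw [← hcomb]
  exact hjensen

theorem nuBarExpSum_zero {x : X} (hx : 1 ≤ nuSharp ν x) : nuBarExpSum 0 ν x = 1 := by
  simp only [nuBarExpSum, Pi.zero_apply, zero_mul, exp_zero, mul_one]
  exact sum_div_nuSharp_eq_one hx

theorem Zpart_pos [Nonempty X] (hp0 : ∀ x, 0 < p0 x) {l : Fin n → ℝ}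
    (hZ : Summable fun x => exp (wdot l ν x) * p0 x) : 0 < Zpart p0 ν l :=
  let ⟨x⟩ := ‹Nonempty X›
  hZ.tsum_pos (fun x => (mul_pos (exp_pos _) (hp0 x)).le) x (mul_pos (exp_pos _) (hp0 x))

theorem pLL_nonneg (hp0 : ∀ x, 0 ≤ p0 x) (l : Fin n → ℝ) (x : X) : 0 ≤ pLL p0 ν l x :=
  mul_nonneg (mul_nonneg (inv_nonneg.2 (tsum_nonneg fun x => mul_nonneg (exp_pos _).le (hp0 x)))
    (exp_pos _).le) (hp0 x)

theorem summable_pLL {l : Fin n → ℝ} (hZ : Summable fun x => exp (wdot l ν x) * p0 x) :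
    Summable (pLL p0 ν l) := by
  refine (hZ.mul_left (Zpart p0 ν l)⁻¹).congr fun x => ?_
  rw [pLL, mul_assoc]

theorem tsum_pLL {l : Fin n → ℝ} (hZ : Zpart p0 ν l ≠ 0) : ∑' x, pLL p0 ν l x = 1 := by
  simp only [pLL, mul_assoc, tsum_mul_left]
  exact inv_mul_cancel₀ hZ

theorem pLL_mul_exp_wdot {γ l : Fin n → ℝ} (hZ : Zpart p0 ν (γ + l) ≠ 0) (x : X) :
    pLL p0 ν l x * exp (wdot γ ν x) = Zpart p0 ν (γ + l) / Zpart p0 ν l * pLL p0 ν (γ + l) x := by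
  simp only [pLL, wdot_add, exp_add]
  field_simp

theorem log_Zpart_add_sub_log_Zpart_le {γ l : Fin n → ℝ} (hp0 : ∀ x, 0 ≤ p0 x)
    (hν : ∀ x, 1 ≤ nuSharp ν x) (hZl : 0 < Zpart p0 ν l) (hZg : 0 < Zpart p0 ν (γ + l))
    (hZgsum : Summable fun x => exp (wdot (γ + l) ν x) * p0 x)
    (hpsum : Summable fun x => pLL p0 ν l x * nuBarExpSum γ ν x) :
    log (Zpart p0 ν (γ + l)) - log (Zpart p0 ν l) ≤ pExp p0 ν l (nuBarExpSum γ ν) - 1 := by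
  have hratio : pExp p0 ν l (fun x => exp (wdot γ ν x)) = Zpart p0 ν (γ + l) / Zpart p0 ν l := by
    rw [pExp, tsum_congr (pLL_mul_exp_wdot hZg.ne'), tsum_mul_left, tsum_pLL hZg.ne', mul_one]
  have hsumm : Summable fun x => pLL p0 ν l x * exp (wdot γ ν x) :=
    ((summable_pLL hZgsum).mul_left _).congr fun x => (pLL_mul_exp_wdot hZg.ne' x).symm
  calc log (Zpart p0 ν (γ + l)) - log (Zpart p0 ν l)
      = log (Zpart p0 ν (γ + l) / Zpart p0 ν l) := (log_div hZg.ne' hZl.ne').symm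
    _ ≤ Zpart p0 ν (γ + l) / Zpart p0 ν l - 1 := log_le_sub_one_of_pos (div_pos hZg hZl)
    _ = pExp p0 ν l (fun x => exp (wdot γ ν x)) - 1 := by rw [hratio]
    _ ≤ pExp p0 ν l (nuBarExpSum γ ν) - 1 := by
      refine sub_le_sub_right (hsumm.tsum_le_tsum (fun x => ?_) hpsum) 1
      exact mul_le_mul_of_nonneg_left (exp_wdot_le_nuBarExpSum (hν x) γ) (pLL_nonneg hp0 l x)

theorem kExp_wdot_le {Yf : X → Y} {y : Y} {γ l : Fin n → ℝ} (hp0 : ∀ x, 0 ≤ p0 x)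
    (hy : 0 < pLLY Yf p0 ν l y) (hZl : 0 < Zpart p0 ν l) (hZg : 0 < Zpart p0 ν (γ + l))
    (hZgsum : Summable fun x => exp (wdot (γ + l) ν x) * p0 x)
    (hk : Summable fun x : {x : X // Yf x = y} =>
      (pLL p0 ν l x.1 / pLLY Yf p0 ν l y) * wdot γ ν x.1) :
    kExp Yf p0 ν l y (wdot γ ν) ≤ log (pLLY Yf p0 ν (γ + l) y) - log (pLLY Yf p0 ν l y)
      + (log (Zpart p0 ν (γ + l)) - log (Zpart p0 ν l)) := by
  set P := pLLY Yf p0 ν l y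
  set Pg := pLLY Yf p0 ν (γ + l) y
  set c := Zpart p0 ν (γ + l) / Zpart p0 ν l / P
  have hw1 : ∑' x : {x : X // Yf x = y}, pLL p0 ν l x.1 / P = 1 := by
    rw [tsum_div_const]
    exact div_self hy.ne'
  have hmix : ∀ x : {x : X // Yf x = y}, pLL p0 ν l x.1 / P * exp (wdot γ ν x.1) =
      c * pLL p0 ν (γ + l) x.1 := fun x => by
    rw [div_mul_eq_mul_div, pLL_mul_exp_wdot hZg.ne']
    ring
  have hsumm : Summable fun x : {x : X // Yf x = y} => pLL p0 ν l x.1 / P * exp (wdot γ ν x.1) :=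
    (((summable_pLL hZgsum).comp_injective Subtype.val_injective).mul_left c).congr
      fun x => (hmix x).symm
  have hjensen : exp (kExp Yf p0 ν l y (wdot γ ν)) ≤ c * Pg :=
    calc exp (kExp Yf p0 ν l y (wdot γ ν))
        = exp (∑' x : {x : X // Yf x = y}, pLL p0 ν l x.1 / P * wdot γ ν x.1) := rfl
      _ ≤ ∑' x : {x : X // Yf x = y}, pLL p0 ν l x.1 / P * exp (wdot γ ν x.1) :=
          exp_tsum_mul_le_tsum_mul_exp (fun x => div_nonneg (pLL_nonneg hp0 l x.1) hy.le) hw1 hk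
            hsumm
      _ = c * Pg := by rw [tsum_congr hmix, tsum_mul_left]; rfl
  have hc : 0 < c := div_pos (div_pos hZg hZl) hy
  have hPg : 0 < Pg := pos_of_mul_pos_right ((exp_pos _).trans_le hjensen) hc.le
  calc kExp Yf p0 ν l y (wdot γ ν) ≤ log (c * Pg) :=
        (le_log_iff_exp_le (mul_pos hc hPg)).2 hjensen
    _ = log Pg - log P + (log (Zpart p0 ν (γ + l)) - log (Zpart p0 ν l)) := by
      rw [log_mul hc.ne' hPg.ne', log_div (div_pos hZg hZl).ne' hy.ne', log_div hZg.ne' hZl.ne']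
      ring

theorem Aaux_le_LL_sub {Yf : X → Y} {𝒴 : Multiset Y} {γ l : Fin n → ℝ} (hp0 : ∀ x, 0 ≤ p0 x)
    (hν : ∀ x, 1 ≤ nuSharp ν x) (hZl : 0 < Zpart p0 ν l) (hZg : 0 < Zpart p0 ν (γ + l))
    (hZgsum : Summable fun x => exp (wdot (γ + l) ν x) * p0 x)
    (hpos : ∀ y ∈ 𝒴, 0 < pLLY Yf p0 ν l y)
    (hksum : ∀ y ∈ 𝒴, Summable fun x : {x : X // Yf x = y} =>
      (pLL p0 ν l x.1 / pLLY Yf p0 ν l y) * wdot γ ν x.1)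
    (hpsum : Summable fun x => pLL p0 ν l x * nuBarExpSum γ ν x) :
    Aaux Yf p0 ν 𝒴 γ l ≤ LL Yf p0 ν 𝒴 (γ + l) - LL Yf p0 ν 𝒴 l := by
  rw [Aaux_eq, LL, LL, ← Multiset.sum_map_sub]
  refine Multiset.sum_map_le_sum_map _ _ fun y hy => ?_
  linarith [kExp_wdot_le hp0 (hpos y hy) hZl hZg hZgsum (hksum y hy),
    log_Zpart_add_sub_log_Zpart_le hp0 hν hZl hZg hZgsum hpsum]

theorem Aaux_zero_left (Yf : X → Y) (𝒴 : Multiset Y) {l : Fin n → ℝ} (hν : ∀ x, 1 ≤ nuSharp ν x)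
    (hZl : Zpart p0 ν l ≠ 0) : Aaux Yf p0 ν 𝒴 0 l = 0 := by
  have hk : ∀ y, kExp Yf p0 ν l y (wdot 0 ν) = 0 := by simp [kExp, wdot]
  have hp : pExp p0 ν l (nuBarExpSum 0 ν) = 1 := by
    simp only [pExp, nuBarExpSum_zero (hν _), mul_one]
    exact tsum_pLL hZl
  simp [Aaux_eq, hk, hp]

end LogLinear

theorem im_step_monotone_general
    {X Y : Type*} (Yf : X → Y)
    (p0 : X → ℝ) (hp0 : ∀ x, 0 < p0 x) (hp0sum : ∑' x : X, p0 x = 1)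
    {n : ℕ} (ν : Fin n → X → ℕ) (hν : ∀ x, 1 ≤ nuSharp ν x)
    (𝒴 : Multiset Y) (l γh : Fin n → ℝ)
    (hZl : Summable fun x : X => Real.exp (wdot l ν x) * p0 x)
    (hZgh : Summable fun x : X => Real.exp (wdot (γh + l) ν x) * p0 x)
    (hpos : ∀ y ∈ 𝒴, 0 < pLLY Yf p0 ν l y)
    (hmax : ∀ γ : Fin n → ℝ, Aaux Yf p0 ν 𝒴 γ l ≤ Aaux Yf p0 ν 𝒴 γh l)
    (hksum : ∀ y ∈ 𝒴, Summable fun x : {x : X // Yf x = y} =>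
      (pLL p0 ν l x.1 / pLLY Yf p0 ν l y) * wdot γh ν x.1)
    (hpsum : Summable fun x : X => pLL p0 ν l x *
      ∑ i, ((ν i x : ℝ) / (nuSharp ν x : ℝ)) * Real.exp (γh i * (nuSharp ν x : ℝ))) :
    LL Yf p0 ν 𝒴 l ≤ LL Yf p0 ν 𝒴 (γh + l) := by
  have : Nonempty X := by
    by_contra h
    rw [not_nonempty_iff] at h
    simp at hp0sum
  have hZlpos := Zpart_pos hp0 hZl
  have hgain := Aaux_le_LL_sub (fun x => (hp0 x).le) hν hZlpos (Zpart_pos hp0 hZgh) hZgh hpos hksum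
    hpsum
  have hA0 := Aaux_zero_left Yf 𝒴 hν hZlpos.ne'
  linarith [hmax 0]

/-- Monotonicity of one IM step: if `γ̂` globally maximizes `A(·,λ)` then
`L(γ̂+λ) ≥ L(λ)`. -/
theorem im_step_monotone
    {X Y : Type*} [Countable X] (Yf : X → Y)
    (p0 : X → ℝ) (hp0 : ∀ x, 0 < p0 x) (hp0sum : ∑' x : X, p0 x = 1)
    {n : ℕ} (ν : Fin n → X → ℕ) (hν : ∀ x, 1 ≤ nuSharp ν x)
    (𝒴 : Multiset Y) (l γh : Fin n → ℝ)
    (hZl : Summable fun x : X => Real.exp (wdot l ν x) * p0 x)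
    (hZgh : Summable fun x : X => Real.exp (wdot (γh + l) ν x) * p0 x)
    (hpos : ∀ y ∈ 𝒴, 0 < pLLY Yf p0 ν l y)
    (hmax : ∀ γ : Fin n → ℝ, Aaux Yf p0 ν 𝒴 γ l ≤ Aaux Yf p0 ν 𝒴 γh l)
    (hksum : ∀ y ∈ 𝒴, Summable fun x : {x : X // Yf x = y} =>
      (pLL p0 ν l x.1 / pLLY Yf p0 ν l y) * wdot γh ν x.1)
    (hpsum : Summable fun x : X => pLL p0 ν l x *
      ∑ i, ((ν i x : ℝ) / (nuSharp ν x : ℝ)) * Real.exp (γh i * (nuSharp ν x : ℝ))) :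
    LL Yf p0 ν 𝒴 l ≤ LL Yf p0 ν 𝒴 (γh + l) :=
  im_step_monotone_general Yf p0 hp0 hp0sum ν hν 𝒴 l γh hZl hZgh hpos hmax hksum hpsum
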